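/- arXiv:1803.00936 — 3 statements merged into one kernel-verified Lean document; each statement's English description precedes it below -/
import Mathlib

section
/- Assume φ: A → A is surjective. Let (N, α_N) →^j (K, α_K) →^f (L, α_L) be a central extension of hom-Lie-Rinehart algebras over (A, φ) with (K, α_K) α-perfect, and set P = uce^φ_A(f)(Ker(u_K)) ⊆ uce^φ_A L. Then an automorphism h of (L, α_L) lifts to an automorphism h̃ of (K, α_K) with h ∘ f = f ∘ h̃ (and such a lift is unique) if and only if uce^φ_A(h)(P) = P; moreover in that case h̃(Ker(f)) = Ker(f), and the assignment h ↦ h̃ is a group isomorphism from {h ∈ Aut(L, α_L) : uce^φ_A(h)(P) = P} onto {g ∈ Aut(K, α_K) : g(Ker(f)) = Ker(f)}. -/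
open TensorProduct Function Set

/-- A hom-Lie-Rinehart algebra structure over `(A, φ)` on the `A`-module `L`. -/
structure HLR (R A : Type) [CommRing R] [CommRing A] [Algebra R A]
    (φ : A →ₐ[R] A) (L : Type) [AddCommGroup L] [Module R L]
    [Module A L] [IsScalarTower R A L] : Type where
  bracket : L → L → L
  add_left : ∀ x y z, bracket (x + y) z = bracket x z + bracket y z
  add_right : ∀ x y z, bracket x (y + z) = bracket x y + bracket x z
  smul_left : ∀ (r : R) (x y : L), bracket (r • x) y = r • bracket x y
  smul_right : ∀ (r : R) (x y : L), bracket x (r • y) = r • bracket x y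
  skew : ∀ x y, bracket x y = - bracket y x
  alpha : L → L
  alpha_add : ∀ x y, alpha (x + y) = alpha x + alpha y
  alpha_smulR : ∀ (r : R) (x : L), alpha (r • x) = r • alpha x
  rho : L → A → A
  rho_add_left : ∀ x y a, rho (x + y) a = rho x a + rho y a
  rho_smulR_left : ∀ (r : R) (x : L) (a : A), rho (r • x) a = r • rho x a
  rho_add_right : ∀ (x : L) (a b : A), rho x (a + b) = rho x a + rho x b
  rho_smulR_right : ∀ (x : L) (r : R) (a : A), rho x (r • a) = r • rho x a
  rho_deriv : ∀ (x : L) (a b : A), rho x (a * b) = φ a * rho x b + φ b * rho x a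
  alpha_bracket : ∀ x y, alpha (bracket x y) = bracket (alpha x) (alpha y)
  hom_jacobi : ∀ x y z, bracket (alpha x) (bracket y z)
      + bracket (alpha y) (bracket z x) + bracket (alpha z) (bracket x y) = 0
  alpha_smulA : ∀ (a : A) (x : L), alpha (a • x) = φ a • alpha x
  rho_alpha : ∀ (x : L) (a : A), rho (alpha x) (φ a) = φ (rho x a)
  rho_bracket : ∀ (x y : L) (a : A), rho (bracket x y) (φ a)
      = rho (alpha x) (rho y a) - rho (alpha y) (rho x a)
  rho_smulA : ∀ (a : A) (x : L) (b : A), rho (a • x) b = φ a * rho x b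
  leibniz : ∀ (x : L) (a : A) (y : L),
      bracket x (a • y) = φ a • bracket x y + rho x a • alpha y

section Defs

variable {R A : Type} [CommRing R] [CommRing A] [Algebra R A] {φ : A →ₐ[R] A}

/-- Homomorphism of hom-Lie-Rinehart algebras over `(A, φ)`: an `A`-linear map
preserving brackets, the twist maps and the anchors. -/
def IsHLRHom {K L : Type}
    [AddCommGroup K] [Module R K] [Module A K] [IsScalarTower R A K]
    [AddCommGroup L] [Module R L] [Module A L] [IsScalarTower R A L]
    (SK : HLR R A φ K) (SL : HLR R A φ L) (f : K → L) : Prop :=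
  (∀ x y, f (x + y) = f x + f y) ∧
  (∀ (a : A) (x : K), f (a • x) = a • f x) ∧
  (∀ x y, f (SK.bracket x y) = SL.bracket (f x) (f y)) ∧
  (∀ x, f (SK.alpha x) = SL.alpha (f x)) ∧
  (∀ (x : K) (a : A), SL.rho (f x) a = SK.rho x a)

/-- The center `Z_A(L)` of a hom-Lie-Rinehart algebra. -/
def HLR.center {L : Type}
    [AddCommGroup L] [Module R L] [Module A L] [IsScalarTower R A L]
    (S : HLR R A φ L) : Set L :=
  {x | ∀ (a : A) (z : L),
    S.bracket (a • x) z = 0 ∧ S.bracket (a • S.alpha x) z = 0 ∧ S.rho x a = 0}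

/-- `(M, i) → (K, σ)` is a central extension of `L`. -/
def IsCentralExt {M K L : Type}
    [AddCommGroup M] [Module R M] [Module A M] [IsScalarTower R A M]
    [AddCommGroup K] [Module R K] [Module A K] [IsScalarTower R A K]
    [AddCommGroup L] [Module R L] [Module A L] [IsScalarTower R A L]
    (SM : HLR R A φ M) (SK : HLR R A φ K) (SL : HLR R A φ L)
    (i : M → K) (σ : K → L) : Prop :=
  IsHLRHom SM SK i ∧ IsHLRHom SK SL σ ∧ Function.Injective i ∧
  Function.Surjective σ ∧ Set.range i = {k | σ k = 0} ∧
  {k | σ k = 0} ⊆ SK.center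

/-- `(M, i) → (K, σ)` is an `α`-central extension of `L`. -/
def IsAlphaCentralExt {M K L : Type}
    [AddCommGroup M] [Module R M] [Module A M] [IsScalarTower R A M]
    [AddCommGroup K] [Module R K] [Module A K] [IsScalarTower R A K]
    [AddCommGroup L] [Module R L] [Module A L] [IsScalarTower R A L]
    (SM : HLR R A φ M) (SK : HLR R A φ K) (SL : HLR R A φ L)
    (i : M → K) (σ : K → L) : Prop :=
  IsHLRHom SM SK i ∧ IsHLRHom SK SL σ ∧ Function.Injective i ∧
  Function.Surjective σ ∧ Set.range i = {k | σ k = 0} ∧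
  (∀ m : M, i (SM.alpha m) ∈ SK.center)

/-- A hom-Lie-Rinehart algebra is perfect if `L = {L, L}`, the `A`-submodule
generated by all brackets. -/
def HLR.IsPerfect {L : Type}
    [AddCommGroup L] [Module R L] [Module A L] [IsScalarTower R A L]
    (S : HLR R A φ L) : Prop :=
  Submodule.span A {z : L | ∃ x y, z = S.bracket x y} = ⊤

/-- A hom-Lie-Rinehart algebra is `α`-perfect if `L = {α_L(L), α_L(L)}`. -/
def HLR.IsAlphaPerfect {L : Type}
    [AddCommGroup L] [Module R L] [Module A L] [IsScalarTower R A L]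
    (S : HLR R A φ L) : Prop :=
  Submodule.span A {z : L | ∃ x y, z = S.bracket (S.alpha x) (S.alpha y)} = ⊤

/-- Universal central extension. -/
def IsUniversalCentralExt {M K L : Type}
    [AddCommGroup M] [Module R M] [Module A M] [IsScalarTower R A M]
    [AddCommGroup K] [Module R K] [Module A K] [IsScalarTower R A K]
    [AddCommGroup L] [Module R L] [Module A L] [IsScalarTower R A L]
    (SM : HLR R A φ M) (SK : HLR R A φ K) (SL : HLR R A φ L)
    (i : M → K) (σ : K → L) : Prop :=
  IsCentralExt SM SK SL i σ ∧
  ∀ (M' L' : Type)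
    [AddCommGroup M'] [Module R M'] [Module A M'] [IsScalarTower R A M']
    [AddCommGroup L'] [Module R L'] [Module A L'] [IsScalarTower R A L']
    (SM' : HLR R A φ M') (SL' : HLR R A φ L') (j : M' → L') (τ : L' → L),
    IsCentralExt SM' SL' SL j τ →
    ∃! h : K → L', IsHLRHom SK SL' h ∧ ∀ x, τ (h x) = σ x

/-- Universal `α`-central extension. -/
def IsUniversalAlphaCentralExt {M K L : Type}
    [AddCommGroup M] [Module R M] [Module A M] [IsScalarTower R A M]
    [AddCommGroup K] [Module R K] [Module A K] [IsScalarTower R A K]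
    [AddCommGroup L] [Module R L] [Module A L] [IsScalarTower R A L]
    (SM : HLR R A φ M) (SK : HLR R A φ K) (SL : HLR R A φ L)
    (i : M → K) (σ : K → L) : Prop :=
  IsCentralExt SM SK SL i σ ∧
  ∀ (M' L' : Type)
    [AddCommGroup M'] [Module R M'] [Module A M'] [IsScalarTower R A M']
    [AddCommGroup L'] [Module R L'] [Module A L'] [IsScalarTower R A L']
    (SM' : HLR R A φ M') (SL' : HLR R A φ L') (j : M' → L') (τ : L' → L),
    IsAlphaCentralExt SM' SL' SL j τ →
    ∃! h : K → L', IsHLRHom SK SL' h ∧ ∀ x, τ (h x) = σ x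

end Defs

section UceDefs

variable {R A : Type} [CommRing R] [CommRing A] [Algebra R A] (φ : A →ₐ[R] A)
variable {L : Type} [AddCommGroup L] [Module R L] [Module A L] [IsScalarTower R A L]

/-- The `A`-submodule `M^φ_A L` of `A ⊗ L ⊗ L` of defining relations of `uce^φ_A L`. -/
def uceRel (S : HLR R A φ L) : Submodule A (A ⊗[R] (L ⊗[R] L)) :=
  Submodule.span A
    ({t | ∃ (a : A) (x : L), t = a ⊗ₜ[R] (x ⊗ₜ[R] x)} ∪
     {t | ∃ (a : A) (x y : L), t = a ⊗ₜ[R] (x ⊗ₜ[R] y) + a ⊗ₜ[R] (y ⊗ₜ[R] x)} ∪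
     {t | ∃ (a : A) (x y z : L), t =
        a ⊗ₜ[R] (S.alpha x ⊗ₜ[R] S.bracket y z)
          + a ⊗ₜ[R] (S.alpha y ⊗ₜ[R] S.bracket z x)
          + a ⊗ₜ[R] (S.alpha z ⊗ₜ[R] S.bracket x y)} ∪
     {t | ∃ (a : A) (x y x' y' : L), t =
        φ a ⊗ₜ[R] (S.bracket x y ⊗ₜ[R] S.bracket x' y')
          + S.rho (S.bracket x y) a ⊗ₜ[R] (S.alpha x' ⊗ₜ[R] S.alpha y')
          - (1 : A) ⊗ₜ[R] (S.bracket x y ⊗ₜ[R] (a • S.bracket x' y'))})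

/-- The underlying `A`-module of `uce^φ_A L`. -/
abbrev UCE (S : HLR R A φ L) : Type := (A ⊗[R] (L ⊗[R] L)) ⧸ uceRel φ S

/-- The coset `(a, x, y)` in `uce^φ_A L`. -/
noncomputable def uceMk (S : HLR R A φ L) (a : A) (x y : L) : UCE φ S :=
  Submodule.Quotient.mk (a ⊗ₜ[R] (x ⊗ₜ[R] y))

/-- `U` is the hom-Lie-Rinehart structure of `uce^φ_A L`: its bracket, twist map and anchor
are given by the defining formulas on cosets. -/
def IsUceStructure (S : HLR R A φ L) (U : HLR R A φ (UCE φ S)) : Prop :=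
  (∀ (a₁ a₂ : A) (x₁ y₁ x₂ y₂ : L),
    U.bracket (uceMk φ S a₁ x₁ y₁) (uceMk φ S a₂ x₂ y₂) =
      uceMk φ S (φ (a₁ * a₂)) (S.bracket x₁ y₁) (S.bracket x₂ y₂)
      + uceMk φ S (φ a₁ * S.rho (S.bracket x₁ y₁) a₂) (S.alpha x₂) (S.alpha y₂)
      - uceMk φ S (φ a₂ * S.rho (S.bracket x₂ y₂) a₁) (S.alpha x₁) (S.alpha y₁)) ∧
  (∀ (a : A) (x y : L),
    U.alpha (uceMk φ S a x y) = uceMk φ S (φ a) (S.alpha x) (S.alpha y)) ∧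
  (∀ (a b : A) (x y : L),
    U.rho (uceMk φ S a x y) b = φ a * S.rho (S.bracket x y) b)

/-- `u` is the canonical map `u_L : uce^φ_A L → L`, `(a,x,y) ↦ a • [x,y]`. -/
def IsUceMap (S : HLR R A φ L) (u : UCE φ S → L) : Prop :=
  (∀ ξ η, u (ξ + η) = u ξ + u η) ∧
  (∀ (a : A) (ξ : UCE φ S), u (a • ξ) = a • u ξ) ∧
  (∀ (a : A) (x y : L), u (uceMk φ S a x y) = a • S.bracket x y)

end UceDefs

section MoreDefs

variable {R A : Type} [CommRing R] [CommRing A] [Algebra R A] (φ : A →ₐ[R] A)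

/-- `F` is the homomorphism `uce^φ_A(f)` induced by `f` on universal central extensions. -/
def IsUceFunctorMap {K L : Type}
    [AddCommGroup K] [Module R K] [Module A K] [IsScalarTower R A K]
    [AddCommGroup L] [Module R L] [Module A L] [IsScalarTower R A L]
    (SK : HLR R A φ K) (SL : HLR R A φ L)
    (UK : HLR R A φ (UCE φ SK)) (UL : HLR R A φ (UCE φ SL))
    (f : K → L) (F : UCE φ SK → UCE φ SL) : Prop :=
  IsHLRHom UK UL F ∧
  ∀ (a : A) (x y : K), F (uceMk φ SK a x y) = uceMk φ SL a (f x) (f y)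

/-- `D` is an `α`-derivation of `(L, α_L)` with symbol `σD`. -/
def IsAlphaDeriv {L : Type}
    [AddCommGroup L] [Module R L] [Module A L] [IsScalarTower R A L]
    (S : HLR R A φ L) (D : L → L) (σD : A → A) : Prop :=
  (∀ x y, D (x + y) = D x + D y) ∧
  (∀ (r : R) (x : L), D (r • x) = r • D x) ∧
  (∀ a b, σD (a + b) = σD a + σD b) ∧
  (∀ (r : R) (a : A), σD (r • a) = r • σD a) ∧
  (∀ a b, σD (a * b) = φ a * σD b + φ b * σD a) ∧
  (∀ x, D (S.alpha x) = S.alpha (D x)) ∧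
  (∀ x y, D (S.bracket x y) = S.bracket (D x) (S.alpha y) + S.bracket (S.alpha x) (D y)) ∧
  (∀ a, σD (φ a) = φ (σD a)) ∧
  (∀ (a : A) (x : L), D (a • x) = φ a • D x + σD a • S.alpha x) ∧
  (∀ (x : L) (a : A), σD (S.rho x a) = S.rho (S.alpha x) (σD a) + S.rho (D x) (φ a))

/-- A quasi hom-action of `(L, α_L)` on `(M, α_M)`. -/
def IsQuasiHomAction {L M : Type}
    [AddCommGroup L] [Module R L] [Module A L] [IsScalarTower R A L]
    [AddCommGroup M] [Module R M] [Module A M] [IsScalarTower R A M]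
    (SL : HLR R A φ L) (SM : HLR R A φ M) (act : L → M → M) : Prop :=
  (∀ (x : L) (a : A) (m : M),
      act x (a • m) = φ a • act x m + SL.rho x a • SM.alpha m) ∧
  (∀ (x y : L) (m : M),
      act (SL.bracket x y) (SM.alpha m)
        = act (SL.alpha x) (act y m) - act (SL.alpha y) (act x m)) ∧
  (∀ (x : L) (m n : M),
      act (SL.alpha x) (SM.bracket m n)
        = SM.bracket (act x m) (SM.alpha n) + SM.bracket (SM.alpha m) (act x n)) ∧
  (∀ (x : L) (m : M) (a : A),
      SM.rho (act x m) (φ a)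
        = SL.rho (SL.alpha x) (SM.rho m a) - SM.rho (SM.alpha m) (SL.rho x a)) ∧
  (∀ (x : L) (m : M), SM.alpha (act x m) = act (SL.alpha x) (SM.alpha m))

/-- Compatibility of two quasi hom-actions on each other. -/
def AreCompatibleActions {L M : Type}
    [AddCommGroup L] [Module R L] [Module A L] [IsScalarTower R A L]
    [AddCommGroup M] [Module R M] [Module A M] [IsScalarTower R A M]
    (SL : HLR R A φ L) (SM : HLR R A φ M)
    (actLM : L → M → M) (actML : M → L → L) : Prop :=
  (∀ (x : L) (m : M) (a : A), SM.rho (actLM x m) a = - SL.rho (actML m x) a) ∧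
  (∀ (m : M) (x : L) (n : M), actLM (actML m x) n = SM.bracket n (actLM x m)) ∧
  (∀ (x : L) (m : M) (y : L), actML (actLM x m) y = SL.bracket y (actML m x))

end MoreDefs

section StarDefs

variable {R A : Type} [CommRing R] [CommRing A] [Algebra R A] (φ : A →ₐ[R] A)
variable {L M : Type}
  [AddCommGroup L] [Module R L] [Module A L] [IsScalarTower R A L]
  [AddCommGroup M] [Module R M] [Module A M] [IsScalarTower R A M]

/-- The `A`-submodule of defining relations of the non-abelian tensor product `L ∗ M`,
inside the free `A`-module on the symbols `x ∗ m`. -/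
noncomputable def starRel (SL : HLR R A φ L) (SM : HLR R A φ M)
    (actLM : L → M → M) (actML : M → L → L) : Submodule A ((L × M) →₀ A) :=
  Submodule.span A
    ({t | ∃ (x y : L) (m : M), t =
        Finsupp.single (x + y, m) (1 : A) - Finsupp.single (x, m) 1
          - Finsupp.single (y, m) 1} ∪
     {t | ∃ (r : R) (x : L) (m : M), t =
        Finsupp.single (r • x, m) (1 : A) - r • Finsupp.single (x, m) (1 : A)} ∪
     {t | ∃ (x : L) (m n : M), t =
        Finsupp.single (x, m + n) (1 : A) - Finsupp.single (x, m) 1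
          - Finsupp.single (x, n) 1} ∪
     {t | ∃ (r : R) (x : L) (m : M), t =
        Finsupp.single (x, r • m) (1 : A) - r • Finsupp.single (x, m) (1 : A)} ∪
     {t | ∃ (x y : L) (m : M), t =
        Finsupp.single (SL.bracket x y, SM.alpha m) (1 : A)
          - Finsupp.single (SL.alpha x, actLM y m) 1
          + Finsupp.single (SL.alpha y, actLM x m) 1} ∪
     {t | ∃ (x : L) (m n : M), t =
        Finsupp.single (SL.alpha x, SM.bracket m n) (1 : A)
          - Finsupp.single (actML n x, SM.alpha m) 1
          + Finsupp.single (actML m x, SM.alpha n) 1} ∪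
     {t | ∃ (a b : A) (x y : L) (m n : M), t =
        Finsupp.single (a • actML m x, b • actLM y n) (1 : A)
          + Finsupp.single (b • actML n y, a • actLM x m) 1} ∪
     {t | ∃ (a b : A) (x y : L) (m n : M), t =
        Finsupp.single (a • actML m x, b • actLM y n) (1 : A)
          - φ (a * b) • Finsupp.single (actML m x, actLM y n) (1 : A)
          + (φ a * SM.rho (actLM x m) b) • Finsupp.single (SL.alpha y, SM.alpha n) (1 : A)
          - (φ b * SM.rho (actLM y n) a) • Finsupp.single (SL.alpha x, SM.alpha m) (1 : A)})

/-- The underlying `A`-module of the non-abelian tensor product `L ∗ M`. -/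
abbrev StarMod (SL : HLR R A φ L) (SM : HLR R A φ M)
    (actLM : L → M → M) (actML : M → L → L) : Type :=
  ((L × M) →₀ A) ⧸ starRel φ SL SM actLM actML

/-- The generator `x ∗ m` of `L ∗ M`. -/
noncomputable def starMk (SL : HLR R A φ L) (SM : HLR R A φ M)
    (actLM : L → M → M) (actML : M → L → L) (x : L) (m : M) :
    StarMod φ SL SM actLM actML :=
  Submodule.Quotient.mk (Finsupp.single (x, m) (1 : A))

/-- `U` is the hom-Lie-Rinehart structure of the non-abelian tensor product `L ∗ M`. -/
def IsStarStructure (SL : HLR R A φ L) (SM : HLR R A φ M)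
    (actLM : L → M → M) (actML : M → L → L)
    (U : HLR R A φ (StarMod φ SL SM actLM actML)) : Prop :=
  (∀ (x : L) (m : M),
      U.alpha (starMk φ SL SM actLM actML x m)
        = starMk φ SL SM actLM actML (SL.alpha x) (SM.alpha m)) ∧
  (∀ (a b : A) (x y : L) (m n : M),
      U.bracket (a • starMk φ SL SM actLM actML x m)
          (b • starMk φ SL SM actLM actML y n)
        = - starMk φ SL SM actLM actML (a • actML m x) (b • actLM y n)) ∧
  (∀ (x : L) (m : M) (a : A),
      U.rho (starMk φ SL SM actLM actML x m) a = SM.rho (actLM x m) a)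

/-- A hom-Lie-Rinehart pairing of `(L, α_L)` and `(M, α_M)` into `(N, α_N)`. -/
def IsHLRPairing {N : Type}
    [AddCommGroup N] [Module R N] [Module A N] [IsScalarTower R A N]
    (SL : HLR R A φ L) (SM : HLR R A φ M) (SN : HLR R A φ N)
    (actLM : L → M → M) (actML : M → L → L) (f : L → M → N) : Prop :=
  (∀ (x y : L) (m : M), f (x + y) m = f x m + f y m) ∧
  (∀ (r : R) (x : L) (m : M), f (r • x) m = r • f x m) ∧
  (∀ (x : L) (m n : M), f x (m + n) = f x m + f x n) ∧
  (∀ (r : R) (x : L) (m : M), f x (r • m) = r • f x m) ∧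
  (∀ (x : L) (m : M) (a : A), SN.rho (f x m) a = SM.rho (actLM x m) a) ∧
  (∀ (x y : L) (m : M),
      f (SL.bracket x y) (SM.alpha m)
        = f (SL.alpha x) (actLM y m) - f (SL.alpha y) (actLM x m)) ∧
  (∀ (x : L) (m n : M),
      f (SL.alpha x) (SM.bracket m n)
        = f (actML n x) (SM.alpha m) - f (actML m x) (SM.alpha n)) ∧
  (∀ (x : L) (m : M), f (SL.alpha x) (SM.alpha m) = SN.alpha (f x m)) ∧
  (∀ (a b : A) (x y : L) (m n : M),
      f (a • actML m x) (b • actLM y n)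
        = - (φ (a * b) • SN.bracket (f x m) (f y n))
          - (φ a * SN.rho (f x m) b) • SN.alpha (f y n)
          + (φ b * SN.rho (f y n) a) • SN.alpha (f x m))

end StarDefs

/-!
For a central extension `f : K → L` the bracket of `K` factors through `f × f`, so choosing
preimages gives a homomorphism `τ : uce L → K`, `(a, x, y) ↦ a • [x̃, ỹ]`, with `f ∘ τ = u_L`;
it is onto when `K` is `α`-perfect, and its kernel is `P = uce(f)(Ker u_K)`. An automorphism
`h` of `L` with `uce(h)(P) = P` therefore descends through `τ` to an automorphism of `K` lying
over `h`; conversely a lift `h̃` satisfies `τ ∘ uce(h) = h̃ ∘ τ`, so `uce(h)` preserves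
`Ker τ = P`. Two homomorphisms into `K` that agree after `f` agree on the brackets
`[α x, α y]`, which generate `K`: this gives uniqueness of lifts, hence multiplicativity of
`h ↦ h̃`, whose inverse sends `g` to the automorphism of `L = K / Ker f` induced by `g`.
-/

section UceLifting

variable {R A : Type} [CommRing R] [CommRing A] [Algebra R A] {φ : A →ₐ[R] A}
variable {X Y Z : Type}
  [AddCommGroup X] [Module R X] [Module A X] [IsScalarTower R A X]
  [AddCommGroup Y] [Module R Y] [Module A Y] [IsScalarTower R A Y]
  [AddCommGroup Z] [Module R Z] [Module A Z] [IsScalarTower R A Z]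
  {SX : HLR R A φ X} {SY : HLR R A φ Y} {SZ : HLR R A φ Z}

namespace HLR

variable (S : HLR R A φ X)

lemma sub_left (x y z : X) : S.bracket (x - y) z = S.bracket x z - S.bracket y z :=
  (AddMonoidHom.mk' (S.bracket · z) (S.add_left · · z)).map_sub x y

lemma sub_right (x y z : X) : S.bracket x (y - z) = S.bracket x y - S.bracket x z :=
  (AddMonoidHom.mk' (S.bracket x) (S.add_right x)).map_sub y z

lemma bracket_smul_smul (a b : A) (u v : X) :
    S.bracket (a • u) (b • v)
      = (φ a * φ b) • S.bracket u v + (φ a * S.rho u b) • S.alpha v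
        - (φ b * S.rho v a) • S.alpha u := by
  have h1 : S.bracket (a • u) v = φ a • S.bracket u v - S.rho v a • S.alpha u := by
    rw [S.skew (a • u) v, S.leibniz v a u, S.skew v u]
    module
  rw [S.leibniz (a • u) b v, S.rho_smulA, h1]
  module

variable {S}

lemma bracket_eq_zero_of_mem_center_left {c : X} (hc : c ∈ S.center) (z : X) :
    S.bracket c z = 0 := by
  simpa using (hc 1 z).1

lemma bracket_eq_zero_of_mem_center_right {c : X} (hc : c ∈ S.center) (z : X) :
    S.bracket z c = 0 := by
  rw [S.skew, bracket_eq_zero_of_mem_center_left hc, neg_zero]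

end HLR

namespace IsHLRHom

variable {g : X → Y}

lemma map_add (hg : IsHLRHom SX SY g) (x y : X) : g (x + y) = g x + g y := hg.1 x y

lemma map_smul (hg : IsHLRHom SX SY g) (a : A) (x : X) : g (a • x) = a • g x := hg.2.1 a x

lemma map_bracket (hg : IsHLRHom SX SY g) (x y : X) :
    g (SX.bracket x y) = SY.bracket (g x) (g y) := hg.2.2.1 x y

lemma map_alpha (hg : IsHLRHom SX SY g) (x : X) : g (SX.alpha x) = SY.alpha (g x) :=
  hg.2.2.2.1 x

lemma rho_map (hg : IsHLRHom SX SY g) (x : X) (a : A) : SY.rho (g x) a = SX.rho x a :=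
  hg.2.2.2.2 x a

lemma rho_bracket_map (hg : IsHLRHom SX SY g) (x y : X) (a : A) :
    SY.rho (SY.bracket (g x) (g y)) a = SX.rho (SX.bracket x y) a := by
  rw [← hg.map_bracket, hg.rho_map]

def toLinearMap (hg : IsHLRHom SX SY g) : X →ₗ[A] Y where
  toFun := g
  map_add' := hg.map_add
  map_smul' := hg.map_smul

lemma map_zero (hg : IsHLRHom SX SY g) : g 0 = 0 := _root_.map_zero hg.toLinearMap

lemma map_sub (hg : IsHLRHom SX SY g) (x y : X) : g (x - y) = g x - g y :=
  _root_.map_sub hg.toLinearMap x y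

lemma comp {h : Y → Z} (hg : IsHLRHom SX SY g) (hh : IsHLRHom SY SZ h) :
    IsHLRHom SX SZ (h ∘ g) :=
  ⟨fun x y => by simp [hg.map_add, hh.map_add], fun a x => by simp [hg.map_smul, hh.map_smul],
    fun x y => by simp [hg.map_bracket, hh.map_bracket],
    fun x => by simp [hg.map_alpha, hh.map_alpha],
    fun x a => by simp only [Function.comp_apply, hh.rho_map, hg.rho_map]⟩

lemma invFun (hg : IsHLRHom SX SY g) (hb : Bijective g) :
    IsHLRHom SY SX (Function.invFun g) := by
  have hr : ∀ y, g (Function.invFun g y) = y := Function.rightInverse_invFun hb.2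
  refine ⟨fun x y => hb.1 ?_, fun a x => hb.1 ?_, fun x y => hb.1 ?_, fun x => hb.1 ?_,
    fun x a => by rw [← hg.rho_map, hr]⟩
  · rw [hg.map_add, hr, hr, hr]
  · rw [hg.map_smul, hr, hr]
  · rw [hg.map_bracket, hr, hr, hr]
  · rw [hg.map_alpha, hr, hr]

lemma map_smul_of_tower (hg : IsHLRHom SX SY g) (r : R) (x : X) : g (r • x) = r • g x :=
  (hg.toLinearMap.restrictScalars R).map_smul r x

variable {T : X → Y} {H : X → X}

lemma exists_isHLRHom_comp_eq (hT : IsHLRHom SX SY T) (hTs : Surjective T)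
    (hH : IsHLRHom SX SX H) (hker : ∀ ξ, T ξ = 0 → T (H ξ) = 0) :
    ∃ g : Y → Y, IsHLRHom SY SY g ∧ ∀ ξ, g (T ξ) = T (H ξ) := by
  obtain ⟨g, hg⟩ : ∃ g : Y → Y, ∀ ξ, g (T ξ) = T (H ξ) := by
    refine ⟨fun y => T (H (surjInv hTs y)), fun ξ => ?_⟩
    have h0 := hker _ (show T (surjInv hTs (T ξ) - ξ) = 0 by
      rw [hT.map_sub, surjInv_eq hTs, sub_self])
    rwa [hH.map_sub, hT.map_sub, sub_eq_zero] at h0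
  refine ⟨g, ⟨fun y y' => ?_, fun a y => ?_, fun y y' => ?_, fun y => ?_, fun y a => ?_⟩, hg⟩
  all_goals obtain ⟨ξ, rfl⟩ := hTs y
  · obtain ⟨ξ', rfl⟩ := hTs y'
    rw [← hT.map_add, hg, hg, hg, hH.map_add, hT.map_add]
  · rw [← hT.map_smul, hg, hg, hH.map_smul, hT.map_smul]
  · obtain ⟨ξ', rfl⟩ := hTs y'
    rw [← hT.map_bracket, hg, hg, hg, hH.map_bracket, hT.map_bracket]
  · rw [← hT.map_alpha, hg, hg, hH.map_alpha, hT.map_alpha]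
  · rw [hg, hT.rho_map, hH.rho_map, hT.rho_map]

lemma bijective_of_comp_eq (hT : IsHLRHom SX SY T) (hTs : Surjective T)
    (hH : IsHLRHom SX SX H) (hHb : Bijective H)
    (hker : H '' {ξ | T ξ = 0} = {ξ | T ξ = 0}) {g : Y → Y}
    (hg : ∀ ξ, g (T ξ) = T (H ξ)) : Bijective g := by
  refine ⟨fun y y' he => ?_, fun y => ?_⟩
  · obtain ⟨ξ, rfl⟩ := hTs y
    obtain ⟨ξ', rfl⟩ := hTs y'
    rw [hg, hg, ← sub_eq_zero, ← hT.map_sub, ← hH.map_sub] at he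
    obtain ⟨ζ, hζ, hHζ⟩ := hker.symm.subset he
    rw [← sub_eq_zero, ← hT.map_sub, ← hHb.1 hHζ]
    exact hζ
  · obtain ⟨ξ, rfl⟩ := (hTs.comp hHb.2) y
    exact ⟨T ξ, hg ξ⟩

lemma exists_bijective_comp_eq (hT : IsHLRHom SX SY T) (hTs : Surjective T)
    (hH : IsHLRHom SX SX H) (hHb : Bijective H)
    (hker : H '' {ξ | T ξ = 0} = {ξ | T ξ = 0}) :
    ∃ g : Y → Y, IsHLRHom SY SY g ∧ Bijective g ∧ ∀ ξ, g (T ξ) = T (H ξ) := by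
  obtain ⟨g, hg, hgT⟩ := hT.exists_isHLRHom_comp_eq hTs hH fun ξ hξ => hker.subset ⟨ξ, hξ, rfl⟩
  exact ⟨g, hg, bijective_of_comp_eq hT hTs hH hHb hker hgT, hgT⟩

end IsHLRHom

section Uce

variable (S : HLR R A φ X)

lemma uce_induction {p : UCE φ S → Prop} (h0 : p 0) (hmk : ∀ a x y, p (uceMk φ S a x y))
    (hadd : ∀ ξ η, p ξ → p η → p (ξ + η)) (ξ : UCE φ S) : p ξ := by
  obtain ⟨t, rfl⟩ := Submodule.Quotient.mk_surjective _ ξ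
  induction t using TensorProduct.induction_on with
  | zero => exact h0
  | tmul a m =>
    induction m using TensorProduct.induction_on with
    | zero => rw [tmul_zero]; exact h0
    | tmul x y => exact hmk a x y
    | add m n hm hn => rw [tmul_add, Submodule.Quotient.mk_add]; exact hadd _ _ hm hn
  | add t u ht hu => rw [Submodule.Quotient.mk_add]; exact hadd _ _ ht hu

lemma uce_ext {γ : Type} [AddCommGroup γ] {g₁ g₂ : UCE φ S → γ}
    (h₁ : ∀ ξ η, g₁ (ξ + η) = g₁ ξ + g₁ η) (h₂ : ∀ ξ η, g₂ (ξ + η) = g₂ ξ + g₂ η)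
    (hmk : ∀ a x y, g₁ (uceMk φ S a x y) = g₂ (uceMk φ S a x y)) (ξ : UCE φ S) :
    g₁ ξ = g₂ ξ :=
  uce_induction S (p := fun ξ => g₁ ξ = g₂ ξ)
    ((AddMonoidHom.mk' g₁ h₁).map_zero.trans (AddMonoidHom.mk' g₂ h₂).map_zero.symm)
    hmk (fun ξ η hξ hη => by rw [h₁, h₂, hξ, hη]) ξ

lemma isHLRHom_of_mk (U : HLR R A φ (UCE φ S)) (G : UCE φ S →ₗ[A] Y)
    (hbr : ∀ a x y b x' y', G (U.bracket (uceMk φ S a x y) (uceMk φ S b x' y'))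
      = SY.bracket (G (uceMk φ S a x y)) (G (uceMk φ S b x' y')))
    (hal : ∀ a x y, G (U.alpha (uceMk φ S a x y)) = SY.alpha (G (uceMk φ S a x y)))
    (hrho : ∀ a x y b, SY.rho (G (uceMk φ S a x y)) b = U.rho (uceMk φ S a x y) b) :
    IsHLRHom U SY G := by
  have hbr_mk : ∀ a x y η, G (U.bracket (uceMk φ S a x y) η)
      = SY.bracket (G (uceMk φ S a x y)) (G η) := fun a x y =>
    uce_ext S (fun η η' => by rw [U.add_right, map_add]) (fun η η' => by rw [map_add, SY.add_right])
      (hbr a x y)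
  refine ⟨map_add G, map_smul G, fun ξ η => ?_, ?_, fun ξ b => ?_⟩
  · exact uce_ext S (g₁ := fun ξ => G (U.bracket ξ η)) (g₂ := fun ξ => SY.bracket (G ξ) (G η))
      (fun ξ ξ' => by simp only [U.add_left, map_add])
      (fun ξ ξ' => by simp only [map_add, SY.add_left])
      (fun a x y => hbr_mk a x y η) ξ
  · exact uce_ext S (fun ξ η => by rw [U.alpha_add, map_add])
      (fun ξ η => by rw [map_add, SY.alpha_add]) hal
  · exact uce_ext S (g₁ := fun ξ => SY.rho (G ξ) b) (g₂ := fun ξ => U.rho ξ b)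
      (fun ξ η => by simp only [map_add, SY.rho_add_left]) (fun ξ η => U.rho_add_left ξ η b)
      (fun a x y => hrho a x y b) ξ

-- Skew-symmetry alone only gives `2 • [x, x] = 0`; the generator `a ⊗ x ⊗ x` of `M^φ_A L`
-- is what makes the bracket alternating.
lemma IsUceMap.bracket_self {u : UCE φ S → X} (hu : IsUceMap φ S u) (x : X) :
    S.bracket x x = 0 := by
  have h0 : uceMk φ S 1 x x = 0 := (Submodule.Quotient.mk_eq_zero _).mpr
    (Submodule.subset_span (Or.inl (Or.inl (Or.inl ⟨1, x, rfl⟩))))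
  have hu0 : u 0 = 0 := (AddMonoidHom.mk' u hu.1).map_zero
  rw [← one_smul A (S.bracket x x), ← hu.2.2, h0, hu0]

variable {S}

variable {g : X → Y}

noncomputable def uceTensorMap (hg : IsHLRHom SX SY g) :
    A ⊗[R] (X ⊗[R] X) →ₗ[A] A ⊗[R] (Y ⊗[R] Y) :=
  (TensorProduct.map (hg.toLinearMap.restrictScalars R)
    (hg.toLinearMap.restrictScalars R)).baseChange A

lemma uceTensorMap_tmul (hg : IsHLRHom SX SY g) (a : A) (x y : X) :
    uceTensorMap hg (a ⊗ₜ[R] (x ⊗ₜ[R] y)) = a ⊗ₜ[R] (g x ⊗ₜ[R] g y) :=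
  rfl

lemma uceRel_le_comap (hg : IsHLRHom SX SY g) :
    uceRel φ SX ≤ (uceRel φ SY).comap (uceTensorMap hg) := by
  rw [uceRel, Submodule.span_le]
  rintro t (((⟨a, x, rfl⟩ | ⟨a, x, y, rfl⟩) | ⟨a, x, y, z, rfl⟩) | ⟨a, x, y, x', y', rfl⟩)
  all_goals
    simp only [SetLike.mem_coe, Submodule.mem_comap, map_add, map_sub, uceTensorMap_tmul,
      hg.map_bracket, hg.map_alpha, hg.map_smul]
    apply Submodule.subset_span
  · exact Or.inl (Or.inl (Or.inl ⟨a, g x, rfl⟩))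
  · exact Or.inl (Or.inl (Or.inr ⟨a, g x, g y, rfl⟩))
  · exact Or.inl (Or.inr ⟨a, g x, g y, g z, rfl⟩)
  · exact Or.inr ⟨a, g x, g y, g x', g y', by rw [hg.rho_bracket_map]⟩

noncomputable def uceMap (hg : IsHLRHom SX SY g) : UCE φ SX →ₗ[A] UCE φ SY :=
  (uceRel φ SX).mapQ (uceRel φ SY) (uceTensorMap hg) (uceRel_le_comap hg)

lemma uceMap_mk (hg : IsHLRHom SX SY g) (a : A) (x y : X) :
    uceMap hg (uceMk φ SX a x y) = uceMk φ SY a (g x) (g y) :=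
  rfl

lemma uceMap_isHLRHom {UX : HLR R A φ (UCE φ SX)} {UY : HLR R A φ (UCE φ SY)}
    (hUX : IsUceStructure φ SX UX) (hUY : IsUceStructure φ SY UY) (hg : IsHLRHom SX SY g) :
    IsHLRHom UX UY (uceMap hg) := by
  refine isHLRHom_of_mk SX UX _ (fun a x y b x' y' => ?_) (fun a x y => ?_) (fun a x y b => ?_)
  · rw [hUX.1, map_sub, map_add]
    simp only [uceMap_mk, hUY.1, hg.map_bracket, hg.map_alpha, hg.rho_bracket_map]
  · simp only [hUX.2.1, uceMap_mk, hUY.2.1, hg.map_alpha]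
  · simp only [uceMap_mk, hUX.2.2, hUY.2.2, hg.rho_bracket_map]

lemma uce_surjective_of_mk (hgs : Surjective g) {G : UCE φ SX → UCE φ SY}
    (hG : ∀ ξ η, G (ξ + η) = G ξ + G η)
    (hmk : ∀ a x y, G (uceMk φ SX a x y) = uceMk φ SY a (g x) (g y)) : Surjective G := by
  refine uce_induction SY (p := fun η => ∃ ξ, G ξ = η) ⟨0, (AddMonoidHom.mk' G hG).map_zero⟩
    (fun a x y => ?_) (fun _ _ => ?_)
  · obtain ⟨u, rfl⟩ := hgs x
    obtain ⟨v, rfl⟩ := hgs y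
    exact ⟨_, hmk a u v⟩
  · rintro ⟨ξ, rfl⟩ ⟨ξ', rfl⟩
    exact ⟨ξ + ξ', hG ξ ξ'⟩

lemma uce_bijective_of_mk (hg : IsHLRHom SX SY g) (hgb : Bijective g)
    {G : UCE φ SX → UCE φ SY} (hG : ∀ ξ η, G (ξ + η) = G ξ + G η)
    (hmk : ∀ a x y, G (uceMk φ SX a x y) = uceMk φ SY a (g x) (g y)) : Bijective G := by
  refine ⟨LeftInverse.injective (g := uceMap (hg.invFun hgb)) fun ξ => ?_,
    uce_surjective_of_mk hgb.2 hG hmk⟩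
  refine uce_ext SX (g₁ := fun ξ => uceMap (hg.invFun hgb) (G ξ)) (g₂ := id)
    (fun ξ η => by simp only [hG, map_add]) (fun _ _ => rfl) (fun a x y => ?_) ξ
  simp only [hmk, uceMap_mk, leftInverse_invFun hgb.1 _, id]

end Uce

lemma image_ker_eq_of_comp_eq {K L : Type} [Zero L] {f : K → L} {h : L → L} {g : K → K}
    (hh0 : h 0 = 0) (hhi : Injective h) (hgs : Surjective g) (hlift : ∀ k, h (f k) = f (g k)) :
    g '' {k | f k = 0} = {k | f k = 0} := by
  ext k
  constructor
  · rintro ⟨c, hc, rfl⟩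
    change f (g c) = 0
    rw [← hlift, hc, hh0]
  · intro hk
    obtain ⟨c, rfl⟩ := hgs k
    exact ⟨c, hhi (by rw [hlift, hh0]; exact hk), rfl⟩

section AutLift

variable {K L : Type} [AddCommGroup K] [Module R K] [Module A K] [IsScalarTower R A K]

def IsAutLift (SK : HLR R A φ K) (f : K → L) (h : L → L) (g : K → K) : Prop :=
  IsHLRHom SK SK g ∧ Bijective g ∧ ∀ k, h (f k) = f (g k)

variable {SK : HLR R A φ K} {f : K → L}

lemma IsAutLift.comp {h₁ h₂ : L → L} {g₁ g₂ : K → K} (hg₁ : IsAutLift SK f h₁ g₁)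
    (hg₂ : IsAutLift SK f h₂ g₂) : IsAutLift SK f (h₁ ∘ h₂) (g₁ ∘ g₂) :=
  ⟨hg₂.1.comp hg₁.1, hg₁.2.1.comp hg₂.2.1, fun k => by simp only [comp_apply, hg₁.2.2, hg₂.2.2]⟩

end AutLift

section CentralCover

variable {K L : Type}
  [AddCommGroup K] [Module R K] [Module A K] [IsScalarTower R A K]
  [AddCommGroup L] [Module R L] [Module A L] [IsScalarTower R A L]
  {SK : HLR R A φ K} {SL : HLR R A φ L} {f : K → L}

lemma bracket_eq_of_map_eq (hf : IsHLRHom SK SL f) (hcent : {k | f k = 0} ⊆ SK.center)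
    {u u' v v' : K} (hu : f u = f u') (hv : f v = f v') :
    SK.bracket u v = SK.bracket u' v' := by
  have hu' : u - u' ∈ SK.center := hcent (by simp [hf.map_sub, hu])
  have hv' : v - v' ∈ SK.center := hcent (by simp [hf.map_sub, hv])
  rw [← sub_eq_zero]
  calc SK.bracket u v - SK.bracket u' v'
      = SK.bracket (u - u') v + SK.bracket u' (v - v') := by
        rw [SK.sub_left, SK.sub_right]; abel
    _ = 0 := by
        rw [HLR.bracket_eq_zero_of_mem_center_left hu', HLR.bracket_eq_zero_of_mem_center_right hv',
          add_zero]

lemma eq_of_comp_eq (hf : IsHLRHom SK SL f) (hcent : {k | f k = 0} ⊆ SK.center)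
    (hap : SX.IsAlphaPerfect) {g₁ g₂ : X → K} (hg₁ : IsHLRHom SX SK g₁)
    (hg₂ : IsHLRHom SX SK g₂) (h : ∀ x, f (g₁ x) = f (g₂ x)) : g₁ = g₂ := by
  refine funext (LinearMap.congr_fun (LinearMap.ext_on (f := hg₁.toLinearMap)
    (g := hg₂.toLinearMap) hap ?_))
  rintro _ ⟨x, y, rfl⟩
  change g₁ _ = g₂ _
  rw [hg₁.map_bracket, hg₂.map_bracket]
  exact bracket_eq_of_map_eq hf hcent (h _) (h _)

lemma IsAutLift.unique (hf : IsHLRHom SK SL f) (hcent : {k | f k = 0} ⊆ SK.center)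
    (hap : SK.IsAlphaPerfect) {h : L → L} {g₁ g₂ : K → K} (hg₁ : IsAutLift SK f h g₁)
    (hg₂ : IsAutLift SK f h g₂) : g₁ = g₂ :=
  eq_of_comp_eq hf hcent hap hg₁.1 hg₂.1 fun k => by rw [← hg₁.2.2, ← hg₂.2.2]

variable (SK) in
noncomputable def coverBracket (hs : Surjective f) (x y : L) : K :=
  SK.bracket (surjInv hs x) (surjInv hs y)

lemma coverBracket_map (hf : IsHLRHom SK SL f) (hs : Surjective f)
    (hcent : {k | f k = 0} ⊆ SK.center) (u v : K) :
    coverBracket SK hs (f u) (f v) = SK.bracket u v :=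
  bracket_eq_of_map_eq hf hcent (surjInv_eq hs _) (surjInv_eq hs _)

variable (hf : IsHLRHom SK SL f) (hs : Surjective f) (hcent : {k | f k = 0} ⊆ SK.center)

noncomputable def coverBracketₗ : L →ₗ[R] L →ₗ[R] K :=
  LinearMap.mk₂ R (coverBracket SK hs)
    (fun x₁ x₂ y => by
      obtain ⟨u₁, rfl⟩ := hs x₁; obtain ⟨u₂, rfl⟩ := hs x₂; obtain ⟨v, rfl⟩ := hs y
      simp only [← hf.map_add, coverBracket_map hf hs hcent, SK.add_left])
    (fun r x y => by
      obtain ⟨u, rfl⟩ := hs x; obtain ⟨v, rfl⟩ := hs y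
      simp only [← hf.map_smul_of_tower, coverBracket_map hf hs hcent, SK.smul_left])
    (fun x y₁ y₂ => by
      obtain ⟨u, rfl⟩ := hs x; obtain ⟨v₁, rfl⟩ := hs y₁; obtain ⟨v₂, rfl⟩ := hs y₂
      simp only [← hf.map_add, coverBracket_map hf hs hcent, SK.add_right])
    (fun r x y => by
      obtain ⟨u, rfl⟩ := hs x; obtain ⟨v, rfl⟩ := hs y
      simp only [← hf.map_smul_of_tower, coverBracket_map hf hs hcent, SK.smul_right])

noncomputable def uceLiftTensor : A ⊗[R] (L ⊗[R] L) →ₗ[A] K :=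
  LinearMap.liftBaseChange A (TensorProduct.lift (coverBracketₗ hf hs hcent))

lemma uceLiftTensor_tmul_map (a : A) (u v : K) :
    uceLiftTensor hf hs hcent (a ⊗ₜ[R] (f u ⊗ₜ[R] f v)) = a • SK.bracket u v := by
  rw [uceLiftTensor, LinearMap.liftBaseChange_tmul, TensorProduct.lift.tmul]
  exact congrArg (a • ·) (coverBracket_map hf hs hcent u v)

lemma uceRel_le_ker_uceLiftTensor (halt : ∀ x, SK.bracket x x = 0) :
    uceRel φ SL ≤ LinearMap.ker (uceLiftTensor hf hs hcent) := by
  rw [uceRel, Submodule.span_le]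
  rintro t (((⟨a, x, rfl⟩ | ⟨a, x, y, rfl⟩) | ⟨a, x, y, z, rfl⟩) | ⟨a, x, y, x', y', rfl⟩)
  · obtain ⟨u, rfl⟩ := hs x
    simp only [SetLike.mem_coe, LinearMap.mem_ker, uceLiftTensor_tmul_map, halt, smul_zero]
  · obtain ⟨u, rfl⟩ := hs x; obtain ⟨v, rfl⟩ := hs y
    simp only [SetLike.mem_coe, LinearMap.mem_ker, map_add, uceLiftTensor_tmul_map]
    rw [SK.skew v u, smul_neg, add_neg_cancel]
  · obtain ⟨u, rfl⟩ := hs x; obtain ⟨v, rfl⟩ := hs y; obtain ⟨w, rfl⟩ := hs z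
    simp only [SetLike.mem_coe, LinearMap.mem_ker, map_add, ← hf.map_alpha, ← hf.map_bracket,
      uceLiftTensor_tmul_map]
    rw [← smul_add, ← smul_add, SK.hom_jacobi, smul_zero]
  · obtain ⟨u, rfl⟩ := hs x; obtain ⟨v, rfl⟩ := hs y
    obtain ⟨u', rfl⟩ := hs x'; obtain ⟨v', rfl⟩ := hs y'
    simp only [SetLike.mem_coe, LinearMap.mem_ker, map_add, map_sub, ← hf.map_alpha,
      ← hf.map_bracket, ← hf.map_smul, hf.rho_map, uceLiftTensor_tmul_map]
    rw [one_smul, SK.leibniz, SK.alpha_bracket]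
    abel

variable (halt : ∀ x, SK.bracket x x = 0)

noncomputable def uceLift : UCE φ SL →ₗ[A] K :=
  (uceRel φ SL).liftQ (uceLiftTensor hf hs hcent) (uceRel_le_ker_uceLiftTensor hf hs hcent halt)

lemma uceLift_mk_map (a : A) (u v : K) :
    uceLift hf hs hcent halt (uceMk φ SL a (f u) (f v)) = a • SK.bracket u v :=
  uceLiftTensor_tmul_map hf hs hcent a u v

lemma uceLift_isHLRHom {UL : HLR R A φ (UCE φ SL)} (hUL : IsUceStructure φ SL UL) :
    IsHLRHom UL SK (uceLift hf hs hcent halt) := by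
  refine isHLRHom_of_mk SL UL _ (fun a x y b x' y' => ?_) (fun a x y => ?_) (fun a x y b => ?_)
  all_goals obtain ⟨u, rfl⟩ := hs x; obtain ⟨v, rfl⟩ := hs y
  · obtain ⟨u', rfl⟩ := hs x'; obtain ⟨v', rfl⟩ := hs y'
    rw [hUL.1, map_sub, map_add]
    simp only [← hf.map_bracket, ← hf.map_alpha, hf.rho_map, uceLift_mk_map]
    rw [SK.bracket_smul_smul, map_mul, SK.alpha_bracket, SK.alpha_bracket]
  · simp only [hUL.2.1, ← hf.map_alpha, uceLift_mk_map, SK.alpha_smulA, SK.alpha_bracket]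
  · simp only [hUL.2.2, uceLift_mk_map, SK.rho_smulA, hf.rho_bracket_map]

lemma uceLift_surjective (hap : SK.IsAlphaPerfect) : Surjective (uceLift hf hs hcent halt) := by
  rw [← LinearMap.range_eq_top, eq_top_iff, ← hap, Submodule.span_le]
  rintro _ ⟨x, y, rfl⟩
  exact ⟨uceMk φ SL 1 (f (SK.alpha x)) (f (SK.alpha y)), by rw [uceLift_mk_map, one_smul]⟩

lemma ker_uceLift {UK : HLR R A φ (UCE φ SK)} {UL : HLR R A φ (UCE φ SL)}
    {uK : UCE φ SK → K} (huK : IsUceMap φ SK uK) {F : UCE φ SK → UCE φ SL}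
    (hF : IsUceFunctorMap φ SK SL UK UL f F) :
    {η | uceLift hf hs hcent halt η = 0} = F '' {ξ | uK ξ = 0} := by
  have hcomp : ∀ ξ, uceLift hf hs hcent halt (F ξ) = uK ξ :=
    uce_ext SK (fun ξ η => by rw [hF.1.map_add, map_add]) huK.1
      (fun a x y => by rw [hF.2, uceLift_mk_map, huK.2.2])
  have hpre : {ξ | uK ξ = 0} = F ⁻¹' {η | uceLift hf hs hcent halt η = 0} := by
    ext ξ
    simp only [Set.mem_preimage, Set.mem_ofPred_eq, hcomp]
  rw [hpre, image_preimage_eq _ (uce_surjective_of_mk hs hF.1.map_add hF.2)]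

end CentralCover

section CanonicalLift

variable {K L : Type}
  [AddCommGroup K] [Module R K] [Module A K] [IsScalarTower R A K]
  [AddCommGroup L] [Module R L] [Module A L] [IsScalarTower R A L]
  {SK : HLR R A φ K} {SL : HLR R A φ L} {f : K → L} {T : UCE φ SL → K}
  {h : L → L}

lemma map_apply_uceMk (hf : IsHLRHom SK SL f) (hs : Surjective f)
    (hTmk : ∀ a u v, T (uceMk φ SL a (f u) (f v)) = a • SK.bracket u v) (a : A) (x y : L) :
    f (T (uceMk φ SL a x y)) = a • SL.bracket x y := by
  obtain ⟨u, rfl⟩ := hs x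
  obtain ⟨v, rfl⟩ := hs y
  rw [hTmk, hf.map_smul, hf.map_bracket]

lemma map_apply_comp_of_mk (hf : IsHLRHom SK SL f) (hs : Surjective f)
    (hT : ∀ ξ η, T (ξ + η) = T ξ + T η)
    (hTmk : ∀ a u v, T (uceMk φ SL a (f u) (f v)) = a • SK.bracket u v)
    (hh : IsHLRHom SL SL h) {H : UCE φ SL → UCE φ SL} (hH : ∀ ξ η, H (ξ + η) = H ξ + H η)
    (hHmk : ∀ a x y, H (uceMk φ SL a x y) = uceMk φ SL a (h x) (h y)) (η : UCE φ SL) :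
    f (T (H η)) = h (f (T η)) :=
  uce_ext SL (g₁ := fun η => f (T (H η))) (g₂ := fun η => h (f (T η)))
    (fun ξ η => by simp only [hH, hT, hf.map_add])
    (fun ξ η => by simp only [hT, hf.map_add, hh.map_add])
    (fun a x y => by simp only [hHmk, map_apply_uceMk hf hs hTmk, hh.map_smul, hh.map_bracket]) η

lemma IsAutLift.apply_uceMap (hs : Surjective f) (hT : ∀ ξ η, T (ξ + η) = T ξ + T η)
    (hTmk : ∀ a u v, T (uceMk φ SL a (f u) (f v)) = a • SK.bracket u v)
    (hh : IsHLRHom SL SL h) {g : K → K} (hg : IsAutLift SK f h g) (η : UCE φ SL) :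
    T (uceMap hh η) = g (T η) := by
  refine uce_ext SL (g₁ := fun η => T (uceMap hh η)) (g₂ := fun η => g (T η))
    (fun ξ η => by simp only [map_add, hT]) (fun ξ η => by simp only [hT, hg.1.map_add])
    (fun a x y => ?_) η
  obtain ⟨u, rfl⟩ := hs x
  obtain ⟨v, rfl⟩ := hs y
  simp only [uceMap_mk, hg.2.2, hTmk, hg.1.map_smul, hg.1.map_bracket]

end CanonicalLift

end UceLifting


section Statement11

variable {R A : Type} [CommRing R] [CommRing A] [Algebra R A] (φ : A →ₐ[R] A)
variable {K L : Type}
  [AddCommGroup K] [Module R K] [Module A K] [IsScalarTower R A K]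
  [AddCommGroup L] [Module R L] [Module A L] [IsScalarTower R A L]

/-- `h` is an automorphism of `(L, α_L)` such that the induced automorphism
`uce^φ_A(h)` maps `P` onto `P`. -/
def LiftableAut (SL : HLR R A φ L) (UL : HLR R A φ (UCE φ SL))
    (P : Set (UCE φ SL)) (h : L → L) : Prop :=
  IsHLRHom SL SL h ∧ Function.Bijective h ∧
  ∃ H : UCE φ SL → UCE φ SL, IsHLRHom UL UL H ∧
    (∀ (a : A) (x y : L), H (uceMk φ SL a x y) = uceMk φ SL a (h x) (h y)) ∧
    H '' P = P

/-- `g` is an automorphism of `(K, α_K)` with `g(Ker f) = Ker f`. -/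
def KerPreservingAut (SK : HLR R A φ K) (f : K → L) (g : K → K) : Prop :=
  IsHLRHom SK SK g ∧ Function.Bijective g ∧
  g '' {k | f k = 0} = {k | f k = 0}


section Lifting

variable {φ} {SK : HLR R A φ K} {SL : HLR R A φ L} {f : K → L} {UL : HLR R A φ (UCE φ SL)}
  {T : UCE φ SL → K} {h : L → L}

lemma liftableAut_of_isAutLift (hs : Surjective f) (hUL : IsUceStructure φ SL UL)
    (hT : ∀ ξ η, T (ξ + η) = T ξ + T η)
    (hTmk : ∀ a u v, T (uceMk φ SL a (f u) (f v)) = a • SK.bracket u v)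
    (hh : IsHLRHom SL SL h) (hhb : Bijective h) {g : K → K} (hg : IsAutLift SK f h g) :
    LiftableAut φ SL UL {η | T η = 0} h := by
  refine ⟨hh, hhb, uceMap hh, uceMap_isHLRHom hUL hUL hh, uceMap_mk hh, ?_⟩
  have hpre : uceMap hh ⁻¹' {η | T η = 0} = {η | T η = 0} := by
    ext η
    simp only [Set.mem_preimage, Set.mem_ofPred_eq, hg.apply_uceMap hs hT hTmk hh]
    exact map_eq_zero_iff hg.1.toLinearMap hg.2.1.1
  nth_rewrite 1 [← hpre]
  exact image_preimage_eq _ (uce_surjective_of_mk hhb.2 (map_add _) (uceMap_mk hh))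

lemma exists_isAutLift_of_liftableAut (hf : IsHLRHom SK SL f) (hs : Surjective f)
    (hT : IsHLRHom UL SK T) (hTs : Surjective T)
    (hTmk : ∀ a u v, T (uceMk φ SL a (f u) (f v)) = a • SK.bracket u v)
    (hla : LiftableAut φ SL UL {η | T η = 0} h) : ∃ g, IsAutLift SK f h g := by
  obtain ⟨hh, hhb, H, hH, hHmk, hHP⟩ := hla
  obtain ⟨g, hg, hgb, hgT⟩ :=
    hT.exists_bijective_comp_eq hTs hH (uce_bijective_of_mk hh hhb hH.map_add hHmk) hHP
  refine ⟨g, hg, hgb, fun k => ?_⟩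
  obtain ⟨η, rfl⟩ := hTs k
  rw [hgT, map_apply_comp_of_mk hf hs hT.map_add hTmk hh hH.map_add hHmk]

end Lifting

theorem statement_11
    {N : Type} [AddCommGroup N] [Module R N] [Module A N] [IsScalarTower R A N]
    (SN : HLR R A φ N) (SK : HLR R A φ K) (SL : HLR R A φ L)
    (j : N → K) (f : K → L)
    (hce : IsCentralExt SN SK SL j f) (hap : SK.IsAlphaPerfect)
    (UK : HLR R A φ (UCE φ SK))
    (UL : HLR R A φ (UCE φ SL)) (hUL : IsUceStructure φ SL UL)
    (uK : UCE φ SK → K) (huK : IsUceMap φ SK uK)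
    (F : UCE φ SK → UCE φ SL) (hF : IsUceFunctorMap φ SK SL UK UL f F)
    (P : Set (UCE φ SL)) (hP : P = F '' {ξ | uK ξ = 0}) :
    (∀ h : L → L, IsHLRHom SL SL h → Function.Bijective h →
      ((∃! ht : K → K, IsHLRHom SK SK ht ∧ Function.Bijective ht ∧
          ∀ k, h (f k) = f (ht k)) ↔
        LiftableAut φ SL UL P h)) ∧
    (∀ (h : L → L) (ht : K → K), IsHLRHom SL SL h → Function.Bijective h →
      IsHLRHom SK SK ht → Function.Bijective ht → (∀ k, h (f k) = f (ht k)) →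
      ht '' {k | f k = 0} = {k | f k = 0}) ∧
    (∃ Φ : (L → L) → (K → K),
      (∀ h : L → L, LiftableAut φ SL UL P h →
        KerPreservingAut φ SK f (Φ h) ∧ ∀ k, h (f k) = f (Φ h k)) ∧
      (∀ h₁ h₂ : L → L, LiftableAut φ SL UL P h₁ → LiftableAut φ SL UL P h₂ →
        Φ (h₁ ∘ h₂) = Φ h₁ ∘ Φ h₂) ∧
      Set.BijOn Φ {h | LiftableAut φ SL UL P h} {g | KerPreservingAut φ SK f g}) := by
  obtain ⟨-, hf, -, hs, -, hcent⟩ := hce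
  have halt := huK.bracket_self
  have hT := uceLift_isHLRHom hf hs hcent halt hUL
  have hTmk := uceLift_mk_map hf hs hcent halt
  rw [← ker_uceLift hf hs hcent halt huK hF] at hP
  subst hP
  have lift_of : ∀ {h}, LiftableAut φ SL UL _ h → ∃ g, IsAutLift SK f h g :=
    exists_isAutLift_of_liftableAut hf hs hT (uceLift_surjective hf hs hcent halt hap) hTmk
  have liftable_of : ∀ {h}, IsHLRHom SL SL h → Bijective h → ∀ {g}, IsAutLift SK f h g →
      LiftableAut φ SL UL _ h :=
    liftableAut_of_isAutLift hs hUL hT.map_add hTmk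
  let Φ : (L → L) → (K → K) := fun h => Classical.epsilon (IsAutLift SK f h)
  have hΦ : ∀ {h}, (∃ g, IsAutLift SK f h g) → IsAutLift SK f h (Φ h) :=
    fun hex => Classical.epsilon_spec hex
  have hmaps : ∀ h, LiftableAut φ SL UL _ h →
      KerPreservingAut φ SK f (Φ h) ∧ ∀ k, h (f k) = f (Φ h k) := fun h hla =>
    have hg := hΦ (lift_of hla)
    ⟨⟨hg.1, hg.2.1, image_ker_eq_of_comp_eq hla.1.map_zero hla.2.1.1 hg.2.1.2 hg.2.2⟩, hg.2.2⟩
  refine ⟨fun h hh hhb => ⟨fun ⟨g, hg, _⟩ => liftable_of hh hhb hg, fun hla => ?_⟩,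
    fun h g hh hhb _ hgb hlift => image_ker_eq_of_comp_eq hh.map_zero hhb.1 hgb.2 hlift,
    Φ, hmaps, fun h₁ h₂ hla₁ hla₂ => ?_, fun _ hla => (hmaps _ hla).1, ?_, ?_⟩
  · obtain ⟨g, hg⟩ := lift_of hla
    exact ⟨g, hg, fun g' hg' => IsAutLift.unique hf hcent hap hg' hg⟩
  · have hcomp := (hΦ (lift_of hla₁)).comp (hΦ (lift_of hla₂))
    exact (hΦ ⟨_, hcomp⟩).unique hf hcent hap hcomp
  · intro h₁ hla₁ h₂ hla₂ heq
    funext l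
    obtain ⟨k, rfl⟩ := hs l
    rw [(hmaps h₁ hla₁).2, (hmaps h₂ hla₂).2, heq]
  · rintro g ⟨hg, hgb, hker⟩
    obtain ⟨h, hh, hhb, hlift⟩ := hf.exists_bijective_comp_eq hs hg hgb hker
    have hga : IsAutLift SK f h g := ⟨hg, hgb, hlift⟩
    exact ⟨h, liftable_of hh hhb hga, (hΦ ⟨g, hga⟩).unique hf hcent hap hga⟩

end Statement11
end

section
/- Let D be an α-derivation of a hom-Lie-Rinehart algebra (L, α_L) over (A, φ) with symbol σ_D. Then the map uce^φ_A(D): uce^φ_A L → uce^φ_A L defined by uce^φ_A(D)(a,x,y) = (σ_D(a), α_L(x), α_L(y)) + (φ(a), D(x), α_L(y)) + (φ(a), α_L(x), D(y)) is a well-defined α-derivation of the hom-Lie-Rinehart algebra (uce^φ_A L, α̃_L) with symbol σ_D, and uce^φ_A(D)(Ker(u_L)) ⊆ Ker(u_L). -/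
open TensorProduct Function Set

/-!
The lift `E = σ_D ⊗ α ⊗ α + φ ⊗ (D ⊗ α + α ⊗ D)` of `uce^φ_A(D)` to `A ⊗ L ⊗ L` is a twisted
derivation over `A`: `E (a • t) = φ a • E t + σ_D a • T t` for the twist `T = φ ⊗ α ⊗ α`, and
`T (a • t) = φ a • T t`. So `E` maps the `A`-span `M^φ_A L` into itself as soon as `E` and `T`
map its generators into it, and there the Leibniz rules for `D` and `σ_D` rewrite the image of
each generator as a sum of generators of the same kind. On the quotient every derivation
identity is additive in each argument, so it suffices to check it on cosets `(a, x, y)`. The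
kernel of `u_L` is preserved because `u_L ∘ uce^φ_A(D) = D ∘ u_L`, which on cosets is the rule
`D (a • [x, y]) = φ a • D [x, y] + σ_D a • α [x, y]`.
-/

namespace HLR

variable {R A : Type} [CommRing R] [CommRing A] [Algebra R A] {φ : A →ₐ[R] A}
variable {L : Type} [AddCommGroup L] [Module R L] [Module A L] [IsScalarTower R A L]
variable (S : HLR R A φ L)

def alphaₗ : L →ₗ[R] L where
  toFun := S.alpha
  map_add' := S.alpha_add
  map_smul' := S.alpha_smulR

@[simp]
lemma alphaₗ_apply (x : L) : S.alphaₗ x = S.alpha x := rfl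

lemma alpha_zero : S.alpha 0 = 0 := S.alphaₗ.map_zero

lemma bracket_zero_left (y : L) : S.bracket 0 y = 0 := by
  simpa using S.smul_left 0 0 y

lemma bracket_zero_right (x : L) : S.bracket x 0 = 0 := by
  simpa using S.smul_right 0 x 0

lemma rho_zero_left (a : A) : S.rho 0 a = 0 := by
  simpa using S.rho_smulR_left 0 0 a

lemma rho_bracket_alpha_alpha (x y : L) (c : A) :
    S.rho (S.bracket (S.alpha x) (S.alpha y)) (φ c) = φ (S.rho (S.bracket x y) c) := by
  rw [← S.alpha_bracket, S.rho_alpha]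

end HLR

namespace IsAlphaDeriv

variable {R A : Type} [CommRing R] [CommRing A] [Algebra R A] {φ : A →ₐ[R] A}
variable {L : Type} [AddCommGroup L] [Module R L] [Module A L] [IsScalarTower R A L]
variable {S : HLR R A φ L} {D : L → L} {σD : A → A}

lemma map_add (hD : IsAlphaDeriv φ S D σD) (x y : L) : D (x + y) = D x + D y := hD.1 x y

lemma map_smul (hD : IsAlphaDeriv φ S D σD) (r : R) (x : L) : D (r • x) = r • D x := hD.2.1 r x

lemma symbol_add (hD : IsAlphaDeriv φ S D σD) (a b : A) : σD (a + b) = σD a + σD b :=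
  hD.2.2.1 a b

lemma symbol_smul (hD : IsAlphaDeriv φ S D σD) (r : R) (a : A) : σD (r • a) = r • σD a :=
  hD.2.2.2.1 r a

lemma symbol_mul (hD : IsAlphaDeriv φ S D σD) (a b : A) :
    σD (a * b) = φ a * σD b + φ b * σD a :=
  hD.2.2.2.2.1 a b

lemma map_alpha (hD : IsAlphaDeriv φ S D σD) (x : L) : D (S.alpha x) = S.alpha (D x) :=
  hD.2.2.2.2.2.1 x

lemma map_bracket (hD : IsAlphaDeriv φ S D σD) (x y : L) :
    D (S.bracket x y) = S.bracket (D x) (S.alpha y) + S.bracket (S.alpha x) (D y) :=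
  hD.2.2.2.2.2.2.1 x y

lemma symbol_map (hD : IsAlphaDeriv φ S D σD) (a : A) : σD (φ a) = φ (σD a) :=
  hD.2.2.2.2.2.2.2.1 a

lemma map_smulA (hD : IsAlphaDeriv φ S D σD) (a : A) (x : L) :
    D (a • x) = φ a • D x + σD a • S.alpha x :=
  hD.2.2.2.2.2.2.2.2.1 a x

lemma symbol_rho (hD : IsAlphaDeriv φ S D σD) (x : L) (a : A) :
    σD (S.rho x a) = S.rho (S.alpha x) (σD a) + S.rho (D x) (φ a) :=
  hD.2.2.2.2.2.2.2.2.2 x a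

def toLinearMap (hD : IsAlphaDeriv φ S D σD) : L →ₗ[R] L where
  toFun := D
  map_add' := hD.map_add
  map_smul' := hD.map_smul

def symbolₗ (hD : IsAlphaDeriv φ S D σD) : A →ₗ[R] A where
  toFun := σD
  map_add' := hD.symbol_add
  map_smul' := hD.symbol_smul

@[simp]
lemma toLinearMap_apply (hD : IsAlphaDeriv φ S D σD) (x : L) : hD.toLinearMap x = D x := rfl

@[simp]
lemma symbolₗ_apply (hD : IsAlphaDeriv φ S D σD) (a : A) : hD.symbolₗ a = σD a := rfl

lemma map_zero (hD : IsAlphaDeriv φ S D σD) : D 0 = 0 := hD.toLinearMap.map_zero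

lemma symbol_zero (hD : IsAlphaDeriv φ S D σD) : σD 0 = 0 := hD.symbolₗ.map_zero

lemma symbol_one (hD : IsAlphaDeriv φ S D σD) : σD 1 = 0 := by
  have h := hD.symbol_mul 1 1
  simp only [mul_one, map_one, one_mul] at h
  linear_combination -h

end IsAlphaDeriv

lemma Submodule.apply_mem_of_mem_span_of_twisted_derivation {A M N : Type*} [Semiring A]
    [AddCommMonoid M] [Module A M] [AddCommMonoid N] [Module A N]
    {s : Set M} {P : Submodule A N} (φ σ : A → A) (T E : M →+ N)
    (hT : ∀ (a : A) (m : M), T (a • m) = φ a • T m)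
    (hE : ∀ (a : A) (m : M), E (a • m) = φ a • E m + σ a • T m)
    (hTs : ∀ m ∈ s, T m ∈ P) (hEs : ∀ m ∈ s, E m ∈ P) {m : M} (hm : m ∈ span A s) :
    E m ∈ P := by
  have hTP : ∀ m ∈ span A s, T m ∈ P := fun m hm => by
    induction hm using Submodule.span_induction with
    | mem m hm => exact hTs m hm
    | zero => simp
    | add m n _ _ hm hn => simpa using add_mem hm hn
    | smul a m _ hm => simpa [hT] using P.smul_mem (φ a) hm
  induction hm using Submodule.span_induction with
  | mem m hm => exact hEs m hm
  | zero => simp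
  | add m n _ _ hm hn => simpa using add_mem hm hn
  | smul a m hm' hm =>
    rw [hE]
    exact add_mem (P.smul_mem _ hm) (P.smul_mem _ (hTP m hm'))

section Uce

variable {R A : Type} [CommRing R] [CommRing A] [Algebra R A] {φ : A →ₐ[R] A}
variable {L : Type} [AddCommGroup L] [Module R L] [Module A L] [IsScalarTower R A L]
variable (S : HLR R A φ L)

lemma tmul_self_mem_uceRel (a : A) (x : L) : a ⊗ₜ[R] (x ⊗ₜ[R] x) ∈ uceRel φ S :=
  Submodule.subset_span (Or.inl (Or.inl (Or.inl ⟨a, x, rfl⟩)))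

lemma tmul_add_tmul_swap_mem_uceRel (a : A) (x y : L) :
    a ⊗ₜ[R] (x ⊗ₜ[R] y) + a ⊗ₜ[R] (y ⊗ₜ[R] x) ∈ uceRel φ S :=
  Submodule.subset_span (Or.inl (Or.inl (Or.inr ⟨a, x, y, rfl⟩)))

lemma hom_jacobi_mem_uceRel (a : A) (x y z : L) :
    a ⊗ₜ[R] (S.alpha x ⊗ₜ[R] S.bracket y z)
      + a ⊗ₜ[R] (S.alpha y ⊗ₜ[R] S.bracket z x)
      + a ⊗ₜ[R] (S.alpha z ⊗ₜ[R] S.bracket x y) ∈ uceRel φ S :=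
  Submodule.subset_span (Or.inl (Or.inr ⟨a, x, y, z, rfl⟩))

lemma leibniz_mem_uceRel (a : A) (x y x' y' : L) :
    φ a ⊗ₜ[R] (S.bracket x y ⊗ₜ[R] S.bracket x' y')
      + S.rho (S.bracket x y) a ⊗ₜ[R] (S.alpha x' ⊗ₜ[R] S.alpha y')
      - (1 : A) ⊗ₜ[R] (S.bracket x y ⊗ₜ[R] (a • S.bracket x' y')) ∈ uceRel φ S :=
  Submodule.subset_span (Or.inr ⟨a, x, y, x', y', rfl⟩)

noncomputable def uceTwist : A ⊗[R] (L ⊗[R] L) →ₗ[R] A ⊗[R] (L ⊗[R] L) :=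
  TensorProduct.map φ.toLinearMap (TensorProduct.map S.alphaₗ S.alphaₗ)

variable {S} {D : L → L} {σD : A → A}

noncomputable def uceDerivLift (hD : IsAlphaDeriv φ S D σD) :
    A ⊗[R] (L ⊗[R] L) →ₗ[R] A ⊗[R] (L ⊗[R] L) :=
  TensorProduct.map hD.symbolₗ (TensorProduct.map S.alphaₗ S.alphaₗ)
    + TensorProduct.map φ.toLinearMap
        (TensorProduct.map hD.toLinearMap S.alphaₗ + TensorProduct.map S.alphaₗ hD.toLinearMap)

lemma uceTwist_tmul (a : A) (x y : L) :
    uceTwist S (a ⊗ₜ[R] (x ⊗ₜ[R] y)) = φ a ⊗ₜ[R] (S.alpha x ⊗ₜ[R] S.alpha y) := rfl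

lemma uceDerivLift_tmul (hD : IsAlphaDeriv φ S D σD) (a : A) (x y : L) :
    uceDerivLift hD (a ⊗ₜ[R] (x ⊗ₜ[R] y))
      = σD a ⊗ₜ[R] (S.alpha x ⊗ₜ[R] S.alpha y)
        + φ a ⊗ₜ[R] (D x ⊗ₜ[R] S.alpha y) + φ a ⊗ₜ[R] (S.alpha x ⊗ₜ[R] D y) := by
  simp [uceDerivLift, TensorProduct.tmul_add, add_assoc]

lemma uceTwist_smul (a : A) (t : A ⊗[R] (L ⊗[R] L)) :
    uceTwist S (a • t) = φ a • uceTwist S t := by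
  induction t using TensorProduct.induction_on with
  | zero => simp
  | tmul b s => simp [uceTwist, TensorProduct.smul_tmul']
  | add t t' ht ht' => simp [ht, ht']

lemma uceDerivLift_smul (hD : IsAlphaDeriv φ S D σD) (a : A) (t : A ⊗[R] (L ⊗[R] L)) :
    uceDerivLift hD (a • t) = φ a • uceDerivLift hD t + σD a • uceTwist S t := by
  induction t using TensorProduct.induction_on with
  | zero => simp
  | tmul b s =>
    simp only [uceDerivLift, uceTwist, TensorProduct.smul_tmul', smul_eq_mul,
      LinearMap.add_apply, TensorProduct.map_tmul, IsAlphaDeriv.symbolₗ_apply, hD.symbol_mul,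
      AlgHom.toLinearMap_apply, map_mul, TensorProduct.add_tmul, smul_add, mul_comm (φ b)]
    abel
  | add t t' ht ht' =>
    simp only [smul_add, map_add, ht, ht']
    abel

lemma uceTwist_leibniz_mem_uceRel (c : A) (x y x' y' : L) :
    uceTwist S (φ c ⊗ₜ[R] (S.bracket x y ⊗ₜ[R] S.bracket x' y')
      + S.rho (S.bracket x y) c ⊗ₜ[R] (S.alpha x' ⊗ₜ[R] S.alpha y')
      - (1 : A) ⊗ₜ[R] (S.bracket x y ⊗ₜ[R] (c • S.bracket x' y'))) ∈ uceRel φ S := by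
  convert leibniz_mem_uceRel S (φ c) (S.alpha x) (S.alpha y) (S.alpha x') (S.alpha y') using 1
  simp only [map_add, map_sub, uceTwist_tmul, map_one, S.alpha_bracket, S.alpha_smulA,
    S.rho_bracket_alpha_alpha]

lemma uceDerivLift_leibniz_mem_uceRel (hD : IsAlphaDeriv φ S D σD) (c : A) (x y x' y' : L) :
    uceDerivLift hD (φ c ⊗ₜ[R] (S.bracket x y ⊗ₜ[R] S.bracket x' y')
      + S.rho (S.bracket x y) c ⊗ₜ[R] (S.alpha x' ⊗ₜ[R] S.alpha y')
      - (1 : A) ⊗ₜ[R] (S.bracket x y ⊗ₜ[R] (c • S.bracket x' y'))) ∈ uceRel φ S := by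
  have h := add_mem (add_mem (add_mem (add_mem
    (leibniz_mem_uceRel S (σD c) (S.alpha x) (S.alpha y) (S.alpha x') (S.alpha y'))
    (leibniz_mem_uceRel S (φ c) (D x) (S.alpha y) (S.alpha x') (S.alpha y')))
    (leibniz_mem_uceRel S (φ c) (S.alpha x) (D y) (S.alpha x') (S.alpha y')))
    (leibniz_mem_uceRel S (φ c) (S.alpha x) (S.alpha y) (D x') (S.alpha y')))
    (leibniz_mem_uceRel S (φ c) (S.alpha x) (S.alpha y) (S.alpha x') (D y'))
  convert h using 1
  simp only [map_add, map_sub, uceDerivLift_tmul, hD.symbol_map, hD.symbol_rho, hD.symbol_one,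
    hD.map_alpha, hD.map_bracket, hD.map_smulA, map_one, S.alpha_bracket, S.alpha_smulA,
    S.rho_add_left, S.rho_bracket_alpha_alpha, TensorProduct.add_tmul, TensorProduct.tmul_add,
    TensorProduct.zero_tmul, smul_add]
  abel

lemma uceDerivLift_mem_uceRel (hD : IsAlphaDeriv φ S D σD) {t : A ⊗[R] (L ⊗[R] L)}
    (ht : t ∈ uceRel φ S) : uceDerivLift hD t ∈ uceRel φ S := by
  refine Submodule.apply_mem_of_mem_span_of_twisted_derivation φ σD (uceTwist S).toAddMonoidHom
    (uceDerivLift hD).toAddMonoidHom uceTwist_smul (uceDerivLift_smul hD) ?_ ?_ ht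
  · rintro _ (((⟨c, x, rfl⟩ | ⟨c, x, y, rfl⟩) | ⟨c, x, y, z, rfl⟩) | ⟨c, x, y, x', y', rfl⟩)
    · exact tmul_self_mem_uceRel S (φ c) (S.alpha x)
    · simpa only [LinearMap.toAddMonoidHom_coe, map_add, uceTwist_tmul]
        using tmul_add_tmul_swap_mem_uceRel S (φ c) (S.alpha x) (S.alpha y)
    · simpa only [LinearMap.toAddMonoidHom_coe, map_add, uceTwist_tmul, S.alpha_bracket]
        using hom_jacobi_mem_uceRel S (φ c) (S.alpha x) (S.alpha y) (S.alpha z)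
    · exact uceTwist_leibniz_mem_uceRel c x y x' y'
  · rintro _ (((⟨c, x, rfl⟩ | ⟨c, x, y, rfl⟩) | ⟨c, x, y, z, rfl⟩) | ⟨c, x, y, x', y', rfl⟩)
    · simpa only [LinearMap.toAddMonoidHom_coe, uceDerivLift_tmul, add_assoc]
        using add_mem (tmul_self_mem_uceRel S (σD c) (S.alpha x))
          (tmul_add_tmul_swap_mem_uceRel S (φ c) (D x) (S.alpha x))
    · convert add_mem (add_mem
          (tmul_add_tmul_swap_mem_uceRel S (σD c) (S.alpha x) (S.alpha y))
          (tmul_add_tmul_swap_mem_uceRel S (φ c) (D x) (S.alpha y)))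
          (tmul_add_tmul_swap_mem_uceRel S (φ c) (S.alpha x) (D y)) using 1
      simp only [LinearMap.toAddMonoidHom_coe, map_add, uceDerivLift_tmul]
      abel
    · convert add_mem (add_mem (add_mem
          (hom_jacobi_mem_uceRel S (σD c) (S.alpha x) (S.alpha y) (S.alpha z))
          (hom_jacobi_mem_uceRel S (φ c) (D x) (S.alpha y) (S.alpha z)))
          (hom_jacobi_mem_uceRel S (φ c) (S.alpha x) (D y) (S.alpha z)))
          (hom_jacobi_mem_uceRel S (φ c) (S.alpha x) (S.alpha y) (D z)) using 1
      simp only [LinearMap.toAddMonoidHom_coe, map_add, uceDerivLift_tmul, hD.map_alpha,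
        hD.map_bracket, S.alpha_bracket, TensorProduct.tmul_add]
      abel
    · exact uceDerivLift_leibniz_mem_uceRel hD c x y x' y'

noncomputable def uceDeriv (hD : IsAlphaDeriv φ S D σD) : UCE φ S →ₗ[R] UCE φ S :=
  ((uceRel φ S).restrictScalars R).liftQ
      ((uceRel φ S).mkQ.restrictScalars R ∘ₗ uceDerivLift hD)
      (fun _ ht => (Submodule.Quotient.mk_eq_zero _).mpr (uceDerivLift_mem_uceRel hD ht)) ∘ₗ
    (Submodule.Quotient.restrictScalarsEquiv R (uceRel φ S)).symm.toLinearMap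

lemma uceDeriv_uceMk (hD : IsAlphaDeriv φ S D σD) (a : A) (x y : L) :
    uceDeriv hD (uceMk φ S a x y)
      = uceMk φ S (σD a) (S.alpha x) (S.alpha y)
        + uceMk φ S (φ a) (D x) (S.alpha y)
        + uceMk φ S (φ a) (S.alpha x) (D y) := by
  change Submodule.Quotient.mk (uceDerivLift hD (a ⊗ₜ[R] (x ⊗ₜ[R] y))) = _
  rw [uceDerivLift_tmul]
  rfl

@[elab_as_elim]
lemma UCE.induction_on {p : UCE φ S → Prop} (ξ : UCE φ S) (zero : p 0)
    (mk : ∀ a x y, p (uceMk φ S a x y)) (add : ∀ ξ η, p ξ → p η → p (ξ + η)) : p ξ := by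
  obtain ⟨t, rfl⟩ := Submodule.Quotient.mk_surjective _ ξ
  induction t using TensorProduct.induction_on with
  | zero => exact zero
  | tmul a s =>
    induction s using TensorProduct.induction_on with
    | zero => simpa using zero
    | tmul x y => exact mk a x y
    | add s s' hs hs' =>
      simpa only [TensorProduct.tmul_add, Submodule.Quotient.mk_add] using add _ _ hs hs'
  | add t t' ht ht' => exact add _ _ ht ht'

lemma uceMk_add_left (a b : A) (x y : L) :
    uceMk φ S (a + b) x y = uceMk φ S a x y + uceMk φ S b x y := by
  simp [uceMk, TensorProduct.add_tmul]

lemma uceMk_add_middle (a : A) (x x' y : L) :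
    uceMk φ S a (x + x') y = uceMk φ S a x y + uceMk φ S a x' y := by
  simp [uceMk, TensorProduct.add_tmul, TensorProduct.tmul_add]

lemma uceMk_add_right (a : A) (x y y' : L) :
    uceMk φ S a x (y + y') = uceMk φ S a x y + uceMk φ S a x y' := by
  simp [uceMk, TensorProduct.tmul_add]

lemma smul_uceMk (a b : A) (x y : L) : a • uceMk φ S b x y = uceMk φ S (a * b) x y := by
  rw [uceMk, uceMk, ← Submodule.Quotient.mk_smul, TensorProduct.smul_tmul', smul_eq_mul]

variable {U : HLR R A φ (UCE φ S)}

lemma IsUceStructure.bracket_uceMk (hU : IsUceStructure φ S U) (a₁ a₂ : A) (x₁ y₁ x₂ y₂ : L) :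
    U.bracket (uceMk φ S a₁ x₁ y₁) (uceMk φ S a₂ x₂ y₂) =
      uceMk φ S (φ (a₁ * a₂)) (S.bracket x₁ y₁) (S.bracket x₂ y₂)
      + uceMk φ S (φ a₁ * S.rho (S.bracket x₁ y₁) a₂) (S.alpha x₂) (S.alpha y₂)
      - uceMk φ S (φ a₂ * S.rho (S.bracket x₂ y₂) a₁) (S.alpha x₁) (S.alpha y₁) :=
  hU.1 a₁ a₂ x₁ y₁ x₂ y₂

lemma IsUceStructure.alpha_uceMk (hU : IsUceStructure φ S U) (a : A) (x y : L) :
    U.alpha (uceMk φ S a x y) = uceMk φ S (φ a) (S.alpha x) (S.alpha y) :=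
  hU.2.1 a x y

lemma IsUceStructure.rho_uceMk (hU : IsUceStructure φ S U) (a b : A) (x y : L) :
    U.rho (uceMk φ S a x y) b = φ a * S.rho (S.bracket x y) b :=
  hU.2.2 a b x y

variable (hD : IsAlphaDeriv φ S D σD)

lemma uceDeriv_alpha (hU : IsUceStructure φ S U) (ξ : UCE φ S) :
    uceDeriv hD (U.alpha ξ) = U.alpha (uceDeriv hD ξ) := by
  induction ξ using UCE.induction_on with
  | zero => simp [U.alpha_zero]
  | mk a x y =>
    simp only [hU.alpha_uceMk, uceDeriv_uceMk, U.alpha_add, hD.symbol_map, hD.map_alpha]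
  | add ξ η hξ hη => simp only [U.alpha_add, map_add, hξ, hη]

lemma uceDeriv_bracket_uceMk (hU : IsUceStructure φ S U) (a₁ a₂ : A) (x₁ y₁ x₂ y₂ : L) :
    uceDeriv hD (U.bracket (uceMk φ S a₁ x₁ y₁) (uceMk φ S a₂ x₂ y₂))
      = U.bracket (uceDeriv hD (uceMk φ S a₁ x₁ y₁)) (U.alpha (uceMk φ S a₂ x₂ y₂))
        + U.bracket (U.alpha (uceMk φ S a₁ x₁ y₁)) (uceDeriv hD (uceMk φ S a₂ x₂ y₂)) := by
  simp only [hU.bracket_uceMk, hU.alpha_uceMk, map_add, map_sub, uceDeriv_uceMk, U.add_left,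
    U.add_right, uceMk_add_left, uceMk_add_middle, uceMk_add_right, hD.map_alpha,
    hD.map_bracket, hD.symbol_map, hD.symbol_mul, hD.symbol_rho, S.alpha_bracket,
    S.rho_add_left, S.rho_bracket_alpha_alpha, map_mul, mul_add]
  ring_nf
  abel

lemma uceDeriv_bracket (hU : IsUceStructure φ S U) (ξ η : UCE φ S) :
    uceDeriv hD (U.bracket ξ η)
      = U.bracket (uceDeriv hD ξ) (U.alpha η) + U.bracket (U.alpha ξ) (uceDeriv hD η) := by
  induction ξ using UCE.induction_on with
  | zero => simp [U.bracket_zero_left, U.alpha_zero]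
  | mk a x y =>
    induction η using UCE.induction_on with
    | zero => simp [U.bracket_zero_right, U.alpha_zero]
    | mk b z w => exact uceDeriv_bracket_uceMk hD hU a b x y z w
    | add η η' hη hη' =>
      simp only [U.add_right, map_add, U.alpha_add, hη, hη']
      abel
  | add ξ ξ' hξ hξ' =>
    simp only [U.add_left, map_add, U.alpha_add, hξ, hξ']
    abel

lemma uceDeriv_smul (hU : IsUceStructure φ S U) (a : A) (ξ : UCE φ S) :
    uceDeriv hD (a • ξ) = φ a • uceDeriv hD ξ + σD a • U.alpha ξ := by
  induction ξ using UCE.induction_on with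
  | zero => simp [U.alpha_zero]
  | mk b x y =>
    simp only [smul_uceMk, uceDeriv_uceMk, hU.alpha_uceMk, smul_add, hD.symbol_mul, map_mul,
      uceMk_add_left]
    ring_nf
    abel
  | add ξ η hξ hη =>
    simp only [smul_add, map_add, U.alpha_add, hξ, hη]
    abel

lemma symbol_rho_uce (hU : IsUceStructure φ S U) (ξ : UCE φ S) (a : A) :
    σD (U.rho ξ a) = U.rho (U.alpha ξ) (σD a) + U.rho (uceDeriv hD ξ) (φ a) := by
  induction ξ using UCE.induction_on with
  | zero => simp [U.rho_zero_left, hD.symbol_zero, U.alpha_zero]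
  | mk b x y =>
    simp only [hU.rho_uceMk, hU.alpha_uceMk, uceDeriv_uceMk, U.rho_add_left, hD.symbol_mul,
      hD.symbol_rho, hD.symbol_map, hD.map_bracket, S.alpha_bracket, S.rho_add_left,
      S.rho_bracket_alpha_alpha]
    ring
  | add ξ η hξ hη =>
    simp only [U.rho_add_left, hD.symbol_add, U.alpha_add, map_add, hξ, hη]
    ring

lemma isAlphaDeriv_uceDeriv (hU : IsUceStructure φ S U) :
    IsAlphaDeriv φ U (uceDeriv hD) σD :=
  ⟨map_add _, map_smul _, hD.symbol_add, hD.symbol_smul, hD.symbol_mul,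
    uceDeriv_alpha hD hU, uceDeriv_bracket hD hU, hD.symbol_map, uceDeriv_smul hD hU,
    symbol_rho_uce hD hU⟩

lemma IsUceMap.apply_uceDeriv {u : UCE φ S → L} (hu : IsUceMap φ S u) (ξ : UCE φ S) :
    u (uceDeriv hD ξ) = D (u ξ) := by
  obtain ⟨hu_add, hu_smul, hu_mk⟩ := hu
  induction ξ using UCE.induction_on with
  | zero =>
    have hu_zero : u 0 = 0 := by simpa using hu_smul 0 0
    rw [map_zero, hu_zero, hD.map_zero]
  | mk a x y =>
    simp only [uceDeriv_uceMk, hu_add, hu_mk, hD.map_smulA, hD.map_bracket, S.alpha_bracket,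
      smul_add]
    abel
  | add ξ η hξ hη => rw [map_add, hu_add, hu_add, hξ, hη, hD.map_add]

end Uce

/-- an `α`-derivation `D` of `(L, α_L)` induces a well-defined `α`-derivation
`uce^φ_A(D)` of `uce^φ_A L` with the same symbol, preserving `Ker(u_L)`. -/
theorem statement_13
    {R A : Type} [CommRing R] [CommRing A] [Algebra R A] (φ : A →ₐ[R] A)
    {L : Type} [AddCommGroup L] [Module R L] [Module A L] [IsScalarTower R A L]
    (S : HLR R A φ L)
    (D : L → L) (σD : A → A) (hD : IsAlphaDeriv φ S D σD)
    (U : HLR R A φ (UCE φ S)) (hU : IsUceStructure φ S U)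
    (u : UCE φ S → L) (hu : IsUceMap φ S u) :
    ∃ Du : UCE φ S → UCE φ S,
      IsAlphaDeriv φ U Du σD ∧
      (∀ (a : A) (x y : L),
        Du (uceMk φ S a x y) =
          uceMk φ S (σD a) (S.alpha x) (S.alpha y)
            + uceMk φ S (φ a) (D x) (S.alpha y)
            + uceMk φ S (φ a) (S.alpha x) (D y)) ∧
      ∀ ξ : UCE φ S, u ξ = 0 → u (Du ξ) = 0 :=
  ⟨uceDeriv hD, isAlphaDeriv_uceDeriv hD hU, uceDeriv_uceMk hD,
    fun ξ hξ => by rw [hu.apply_uceDeriv hD, hξ, hD.map_zero]⟩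
end

section
/- Let f: (K, α_K) → (L, α_L) be a homomorphism of hom-Lie-Rinehart algebras over (A, φ). If D_K is an α-derivation of (K, α_K) and D_L is an α-derivation of (L, α_L), both with the same symbol σ_D ∈ Der_φ(A), such that f ∘ D_K = D_L ∘ f, then uce^φ_A(f) ∘ uce^φ_A(D_K) = uce^φ_A(D_L) ∘ uce^φ_A(f). -/
open TensorProduct Function Set

section UceExt

variable {R A : Type} [CommRing R] [CommRing A] [Algebra R A] {φ : A →ₐ[R] A}
variable {L : Type} [AddCommGroup L] [Module R L] [Module A L] [IsScalarTower R A L]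

theorem uce_induction_on {S : HLR R A φ L} {P : UCE φ S → Prop} (zero : P 0)
    (add : ∀ ξ η, P ξ → P η → P (ξ + η)) (mk : ∀ a x y, P (uceMk φ S a x y))
    (ξ : UCE φ S) : P ξ := by
  obtain ⟨t, rfl⟩ := Submodule.Quotient.mk_surjective _ ξ
  induction t using TensorProduct.induction_on with
  | zero => rwa [Submodule.Quotient.mk_zero]
  | add t₁ t₂ ih₁ ih₂ => exact add _ _ ih₁ ih₂
  | tmul a s =>
    induction s using TensorProduct.induction_on with
    | zero => rwa [TensorProduct.tmul_zero, Submodule.Quotient.mk_zero]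
    | add s₁ s₂ ih₁ ih₂ =>
      rw [TensorProduct.tmul_add, Submodule.Quotient.mk_add]
      exact add _ _ ih₁ ih₂
    | tmul x y => exact mk a x y

theorem uce_addMonoidHom_ext {S : HLR R A φ L} {M : Type} [AddCommMonoid M]
    {g h : UCE φ S →+ M} (hgh : ∀ a x y, g (uceMk φ S a x y) = h (uceMk φ S a x y)) :
    g = h :=
  AddMonoidHom.ext <| uce_induction_on (by simp only [map_zero])
    (fun _ _ hξ hη => by simp only [map_add, hξ, hη]) hgh

end UceExt

theorem statement_14_general
    {R A : Type} [CommRing R] [CommRing A] [Algebra R A] (φ : A →ₐ[R] A)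
    {K L : Type}
    [AddCommGroup K] [Module R K] [Module A K] [IsScalarTower R A K]
    [AddCommGroup L] [Module R L] [Module A L] [IsScalarTower R A L]
    (SK : HLR R A φ K) (SL : HLR R A φ L)
    (f : K → L) (hf : IsHLRHom SK SL f)
    (DK : K → K) (DL : L → L) (σD : A → A)
    (hcomm : ∀ x, f (DK x) = DL (f x))
    (UK : HLR R A φ (UCE φ SK))
    (UL : HLR R A φ (UCE φ SL))
    (F : UCE φ SK → UCE φ SL) (hF : IsUceFunctorMap φ SK SL UK UL f F)
    (DKu : UCE φ SK → UCE φ SK)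
    (hDKu : IsAlphaDeriv φ UK DKu σD)
    (hDKuf : ∀ (a : A) (x y : K),
      DKu (uceMk φ SK a x y) =
        uceMk φ SK (σD a) (SK.alpha x) (SK.alpha y)
          + uceMk φ SK (φ a) (DK x) (SK.alpha y)
          + uceMk φ SK (φ a) (SK.alpha x) (DK y))
    (DLu : UCE φ SL → UCE φ SL)
    (hDLu : IsAlphaDeriv φ UL DLu σD)
    (hDLuf : ∀ (a : A) (x y : L),
      DLu (uceMk φ SL a x y) =
        uceMk φ SL (σD a) (SL.alpha x) (SL.alpha y)
          + uceMk φ SL (φ a) (DL x) (SL.alpha y)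
          + uceMk φ SL (φ a) (SL.alpha x) (DL y)) :
    ∀ ξ : UCE φ SK, F (DKu ξ) = DLu (F ξ) := by
  obtain ⟨-, -, -, hf_alpha, -⟩ := hf
  obtain ⟨⟨hF_add, -⟩, hF_mk⟩ := hF
  have on_generators : ∀ a x y, F (DKu (uceMk φ SK a x y)) = DLu (F (uceMk φ SK a x y)) := by
    intro a x y
    rw [hDKuf, hF_add, hF_add, hF_mk, hF_mk, hF_mk, hF_mk, hDLuf, hf_alpha, hf_alpha,
      hcomm, hcomm]
  let F' : UCE φ SK →+ UCE φ SL := AddMonoidHom.mk' F hF_add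
  exact DFunLike.congr_fun <| uce_addMonoidHom_ext (g := F'.comp (AddMonoidHom.mk' DKu hDKu.1))
    (h := (AddMonoidHom.mk' DLu hDLu.1).comp F') on_generators

/-- if `f ∘ D_K = D_L ∘ f` for `α`-derivations with the same symbol, then
`uce^φ_A(f) ∘ uce^φ_A(D_K) = uce^φ_A(D_L) ∘ uce^φ_A(f)`. -/
theorem statement_14
    {R A : Type} [CommRing R] [CommRing A] [Algebra R A] (φ : A →ₐ[R] A)
    {K L : Type}
    [AddCommGroup K] [Module R K] [Module A K] [IsScalarTower R A K]
    [AddCommGroup L] [Module R L] [Module A L] [IsScalarTower R A L]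
    (SK : HLR R A φ K) (SL : HLR R A φ L)
    (f : K → L) (hf : IsHLRHom SK SL f)
    (DK : K → K) (DL : L → L) (σD : A → A)
    (hDK : IsAlphaDeriv φ SK DK σD) (hDL : IsAlphaDeriv φ SL DL σD)
    (hcomm : ∀ x, f (DK x) = DL (f x))
    (UK : HLR R A φ (UCE φ SK)) (hUK : IsUceStructure φ SK UK)
    (UL : HLR R A φ (UCE φ SL)) (hUL : IsUceStructure φ SL UL)
    (F : UCE φ SK → UCE φ SL) (hF : IsUceFunctorMap φ SK SL UK UL f F)
    (DKu : UCE φ SK → UCE φ SK)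
    (hDKu : IsAlphaDeriv φ UK DKu σD)
    (hDKuf : ∀ (a : A) (x y : K),
      DKu (uceMk φ SK a x y) =
        uceMk φ SK (σD a) (SK.alpha x) (SK.alpha y)
          + uceMk φ SK (φ a) (DK x) (SK.alpha y)
          + uceMk φ SK (φ a) (SK.alpha x) (DK y))
    (DLu : UCE φ SL → UCE φ SL)
    (hDLu : IsAlphaDeriv φ UL DLu σD)
    (hDLuf : ∀ (a : A) (x y : L),
      DLu (uceMk φ SL a x y) =
        uceMk φ SL (σD a) (SL.alpha x) (SL.alpha y)
          + uceMk φ SL (φ a) (DL x) (SL.alpha y)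
          + uceMk φ SL (φ a) (SL.alpha x) (DL y)) :
    ∀ ξ : UCE φ SK, F (DKu ξ) = DLu (F ξ) :=
  statement_14_general φ SK SL f hf DK DL σD hcomm UK UL F hF DKu hDKu hDKuf DLu hDLu hDLuf
end
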